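/- arXiv:1606.01835 — 2 statements merged into one kernel-verified Lean document; each statement's English description precedes it below -/
import Mathlib

section
/- Fix d ≥ 1, m ≥ 1, an integer k ≥ 1 and n = km. If the environment variables ω(i,y) and the m-tree environment copies ω^u(j,y) are i.i.d. standard Gaussian, then the maximal polymer energy is stochastically dominated by the maximal m-tree energy: for every t ∈ ℝ, ℙ(max_{x∈Π_n} H_n(x) > t) ≤ ℙ(max_{x∈Π_n} H_n^{m-tree}(x) > t). -/
open MeasureTheory ProbabilityTheory Real Finset

noncomputable section

/-- A nearest-neighbour step of the simple random walk on `ℤ^d`, encoded by a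
coordinate direction and a sign. -/
def step (d : ℕ) (s : Fin d × Bool) : Fin d → ℤ :=
  fun j => if j = s.1 then (if s.2 then 1 else -1) else 0

/-- Position after `i` steps of the nearest-neighbour path (started at the origin)
with step sequence `s`.  Nearest-neighbour paths in `Π_n` (starting at `0`) are
identified with their step sequences `s : Fin n → Fin d × Bool`. -/
def pos {d n : ℕ} (s : Fin n → Fin d × Bool) (i : ℕ) : Fin d → ℤ :=
  ∑ j ∈ Finset.univ.filter (fun j : Fin n => (j : ℕ) < i), step d (s j)

/-- The polymer energy `H_n(x) = ∑_{i=1}^n ω(i, x_i)`. -/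
def polymerEnergy {Ω : Type*} {d : ℕ} (n : ℕ) (env : ℕ × (Fin d → ℤ) → Ω → ℝ)
    (s : Fin n → Fin d × Bool) (o : Ω) : ℝ :=
  ∑ i ∈ Finset.range n, env (i + 1, pos s (i + 1)) o

/-- The `(x_m, x_{2m}, …, x_{lm})` word indexing the environment block used by the
path `s` in the `l`-th block of the `m`-tree. -/
def treeWord {d n : ℕ} (m : ℕ) (s : Fin n → Fin d × Bool) (l : ℕ) : List (Fin d → ℤ) :=
  List.ofFn (fun r : Fin l => pos s ((r + 1) * m))

/-- The `m`-tree energy `H_n^{m-tree}(x)`, for `n = k m`: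
`∑_{l=0}^{k-1} ∑_{j=1}^{m} ω^{(x_m, …, x_{lm})}(j, x_{lm+j} − x_{lm})`. -/
def treeEnergy {Ω : Type*} {d : ℕ} (n m k : ℕ)
    (envT : List (Fin d → ℤ) × ℕ × (Fin d → ℤ) → Ω → ℝ)
    (s : Fin n → Fin d × Bool) (o : Ω) : ℝ :=
  ∑ l ∈ Finset.range k, ∑ j ∈ Finset.range m,
    envT (treeWord m s l, (j + 1, pos s (l * m + (j + 1)) - pos s (l * m))) o

/-- An i.i.d. family with common law `ν`: measurable, jointly independent,
identically distributed. -/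
def IID {Ω ι : Type*} [MeasurableSpace Ω] (μ : Measure Ω) (f : ι → Ω → ℝ) (ν : Measure ℝ) : Prop :=
  (∀ i, Measurable (f i)) ∧ iIndepFun f μ ∧ ∀ i, Measure.map (f i) μ = ν

/-!
It suffices to compare the probabilities that all path energies stay at most `t`, by induction
on the number `k` of blocks. Split a path into its first block `b`, ending at `z = x_m`, and the
rest. Given the environment of the first block, both events say that for every endpoint `z`, all
continuations from `z` stay below `t - H_m(b)` for every first block `b` ending at `z`. In the
tree these continuation events live on the independent subtrees rooted at the various `z`, so
their conditional probability is the product over `z`; in the polymer they are decreasing events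
of the common environment after time `m`, so by the Harris–FKG inequality their probability is at
least that product. The factors are compared by the induction hypothesis, since the polymer
environment after time `m`, translated by `z`, is again i.i.d.
-/

open scoped ENNReal

theorem ENNReal.mul_add_mul_le_mul_add_mul {a b c d : ℝ≥0∞} (hab : a ≤ b) (hcd : c ≤ d) :
    a * d + b * c ≤ a * c + b * d := by
  obtain ⟨b, rfl⟩ := exists_add_of_le hab
  obtain ⟨d, rfl⟩ := exists_add_of_le hcd
  calc a * (c + d) + (a + b) * c = a * c + a * c + a * d + b * c := by ring
    _ ≤ a * c + a * c + a * d + b * c + b * d := le_self_add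
    _ = a * c + (a + b) * (c + d) := by ring

section Harris

variable {α β : Type*} [MeasurableSpace α] [MeasurableSpace β]

def HasHarrisProperty [Preorder α] (μ : Measure α) : Prop :=
  ∀ ⦃f g : α → ℝ≥0∞⦄, Measurable f → Measurable g → Antitone f → Antitone g →
    (∫⁻ x, f x ∂μ) * ∫⁻ x, g x ∂μ ≤ ∫⁻ x, f x * g x ∂μ

theorem hasHarrisProperty_of_linearOrder [LinearOrder α] (μ : Measure α)
    [IsProbabilityMeasure μ] : HasHarrisProperty μ := by
  intro f g hf hg hfa hga
  -- Chebyshev's trick: integrate the two-point rearrangement inequality over `μ ⊗ μ`.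
  have hpoint : ∀ z : α × α, f z.1 * g z.2 + g z.1 * f z.2 ≤ f z.1 * g z.1 + f z.2 * g z.2 := by
    rintro ⟨x, y⟩
    rcases le_total x y with h | h
    · simpa [add_comm, mul_comm] using ENNReal.mul_add_mul_le_mul_add_mul (hfa h) (hga h)
    · simpa [mul_comm] using ENNReal.mul_add_mul_le_mul_add_mul (hfa h) (hga h)
  have key := lintegral_mono (μ := μ.prod μ) hpoint
  rw [lintegral_add_left (by fun_prop), lintegral_add_left (by fun_prop),
    lintegral_prod_mul hf.aemeasurable hg.aemeasurable,
    lintegral_prod_mul hg.aemeasurable hf.aemeasurable,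
    measurePreserving_fst.lintegral_comp (f := fun x => f x * g x) (by fun_prop),
    measurePreserving_snd.lintegral_comp (f := fun x => f x * g x) (by fun_prop),
    mul_comm (∫⁻ x, g x ∂μ), ← two_mul, ← two_mul] at key
  exact (ENNReal.mul_le_mul_iff_right two_ne_zero ENNReal.ofNat_ne_top).1 key

theorem HasHarrisProperty.map [Preorder α] [Preorder β] {μ : Measure α} (hμ : HasHarrisProperty μ)
    {φ : α → β} (hφ : Measurable φ) (hφm : Monotone φ) : HasHarrisProperty (μ.map φ) := by
  intro f g hf hg hfa hga
  rw [lintegral_map hf hφ, lintegral_map hg hφ, lintegral_map (by fun_prop) hφ]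
  exact hμ (hf.comp hφ) (hg.comp hφ) (hfa.comp_monotone hφm) (hga.comp_monotone hφm)

theorem HasHarrisProperty.prod [Preorder α] [Preorder β] {μ : Measure α} {ν : Measure β}
    [SFinite μ] [SFinite ν] (hμ : HasHarrisProperty μ) (hν : HasHarrisProperty ν) :
    HasHarrisProperty (μ.prod ν) := by
  intro f g hf hg hfa hga
  have hsection : ∀ {h : α × β → ℝ≥0∞}, Antitone h → Antitone fun a => ∫⁻ b, h (a, b) ∂ν :=
    fun hh _ _ hab => lintegral_mono fun _ => hh (Prod.mk_le_mk.2 ⟨hab, le_rfl⟩)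
  rw [lintegral_prod _ hf.aemeasurable, lintegral_prod _ hg.aemeasurable,
    lintegral_prod (fun z => f z * g z) (by fun_prop)]
  calc (∫⁻ a, ∫⁻ b, f (a, b) ∂ν ∂μ) * ∫⁻ a, ∫⁻ b, g (a, b) ∂ν ∂μ
      ≤ ∫⁻ a, (∫⁻ b, f (a, b) ∂ν) * ∫⁻ b, g (a, b) ∂ν ∂μ :=
        hμ hf.lintegral_prod_right' hg.lintegral_prod_right' (hsection hfa) (hsection hga)
    _ ≤ ∫⁻ a, ∫⁻ b, f (a, b) * g (a, b) ∂ν ∂μ := lintegral_mono fun a =>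
        hν (hf.comp measurable_prodMk_left) (hg.comp measurable_prodMk_left)
          (fun _ _ h => hfa (Prod.mk_le_mk.2 ⟨le_rfl, h⟩))
          (fun _ _ h => hga (Prod.mk_le_mk.2 ⟨le_rfl, h⟩))

theorem hasHarrisProperty_pi_fin [LinearOrder α] :
    ∀ {n : ℕ} (μ : Fin n → Measure α) [∀ i, IsProbabilityMeasure (μ i)],
      HasHarrisProperty (Measure.pi μ)
  | 0, μ, _ => by
    intro f g _ _ _ _
    rw [Measure.pi_of_empty μ, lintegral_dirac, lintegral_dirac, lintegral_dirac]
  | n + 1, μ, _ => by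
    rw [← (measurePreserving_piFinSuccAbove μ 0).symm.map_eq]
    refine ((hasHarrisProperty_of_linearOrder (μ 0)).prod
      (hasHarrisProperty_pi_fin fun i => μ i.succ)).map (MeasurableEquiv.measurable _) ?_
    intro p q hpq
    simp only [MeasurableEquiv.piFinSuccAbove_symm_apply, Fin.insertNthEquiv_zero]
    exact Fin.cons_le_cons.2 hpq

theorem hasHarrisProperty_pi [LinearOrder α] {ι : Type*} [Fintype ι] (μ : ι → Measure α)
    [∀ i, IsProbabilityMeasure (μ i)] : HasHarrisProperty (Measure.pi μ) := by
  let e := (Fintype.equivFin ι).symm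
  rw [← (measurePreserving_piCongrLeft μ e).map_eq]
  refine (hasHarrisProperty_pi_fin fun i => μ (e i)).map (MeasurableEquiv.measurable _) ?_
  intro x y hxy i
  simp only [MeasurableEquiv.coe_piCongrLeft]
  obtain ⟨i, rfl⟩ := e.surjective i
  simpa [Equiv.piCongrLeft_apply_apply] using hxy i

theorem HasHarrisProperty.measure_mul_le_measure_inter [Preorder α] {μ : Measure α}
    (hμ : HasHarrisProperty μ) {A B : Set α} (hA : MeasurableSet A) (hB : MeasurableSet B)
    (hAl : IsLowerSet A) (hBl : IsLowerSet B) : μ A * μ B ≤ μ (A ∩ B) := by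
  have hanti : ∀ {C : Set α}, IsLowerSet C → Antitone (C.indicator (1 : α → ℝ≥0∞)) := by
    intro C hC x y hxy
    by_cases hy : y ∈ C
    · simp [hy, hC hxy hy]
    · simp [hy]
  have h := hμ (measurable_one.indicator hA) (measurable_one.indicator hB) (hanti hAl) (hanti hBl)
  rwa [lintegral_indicator_one hA, lintegral_indicator_one hB, ← Pi.mul_def,
    ← Set.inter_indicator_one, lintegral_indicator_one (hA.inter hB)] at h

theorem HasHarrisProperty.prod_measure_le_measure_biInter [Preorder α] {μ : Measure α}
    [IsProbabilityMeasure μ] (hμ : HasHarrisProperty μ) {γ : Type*} (Z : Finset γ)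
    {A : γ → Set α} (hA : ∀ z ∈ Z, MeasurableSet (A z)) (hAl : ∀ z ∈ Z, IsLowerSet (A z)) :
    ∏ z ∈ Z, μ (A z) ≤ μ (⋂ z ∈ Z, A z) := by
  classical
  induction Z using Finset.induction_on with
  | empty => simp
  | insert a Z haZ ih =>
    rw [Finset.prod_insert haZ, Finset.set_biInter_insert]
    have hZ : ∀ z ∈ Z, z ∈ insert a Z := fun z hz => Finset.mem_insert_of_mem hz
    calc μ (A a) * ∏ z ∈ Z, μ (A z)
        ≤ μ (A a) * μ (⋂ z ∈ Z, A z) := by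
          gcongr
          exact ih (fun z hz => hA z (hZ z hz)) (fun z hz => hAl z (hZ z hz))
      _ ≤ μ (A a ∩ ⋂ z ∈ Z, A z) :=
          hμ.measure_mul_le_measure_inter (hA a (Finset.mem_insert_self a Z))
            (.biInter Z.countable_toSet fun z hz => hA z (hZ z hz))
            (hAl a (Finset.mem_insert_self a Z))
            (isLowerSet_iInter₂ fun z hz => hAl z (hZ z hz))

end Harris

theorem dependsOn_mem_iInter {ι α : Type*} {β : Sort*} {A : β → Set (ι → α)} {s : Set ι}
    (hA : ∀ b, DependsOn (· ∈ A b) s) : DependsOn (· ∈ ⋂ b, A b) s := fun _ _ h => by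
  simp only [Set.mem_iInter]
  exact propext (forall_congr' fun b => (hA b h).to_iff)

theorem dependsOn_mem_preimage_comp {ι ι' α : Type*} {A : Set (ι → α)} {s : Set ι}
    (hA : DependsOn (· ∈ A) s) (σ : ι → ι') :
    DependsOn (· ∈ (fun (x : ι' → α) i => x (σ i)) ⁻¹' A) (σ '' s) :=
  fun _ _ h => hA fun i hi => h _ ⟨i, hi, rfl⟩

section InfinitePi

open Measure

variable {α : Type*} [MeasurableSpace α] (ν : Measure α) [IsProbabilityMeasure ν]

theorem measurable_sumElim_pi {ι₁ ι₂ : Type*} :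
    Measurable fun p : (ι₁ → α) × (ι₂ → α) => Sum.elim p.1 p.2 :=
  measurable_pi_lambda _ fun i => by
    cases i
    · exact (measurable_pi_apply _).comp measurable_fst
    · exact (measurable_pi_apply _).comp measurable_snd

theorem map_sumElim_prod_infinitePi {ι₁ ι₂ : Type*} :
    ((infinitePi fun _ : ι₁ => ν).prod (infinitePi fun _ : ι₂ => ν)).map
      (fun p => Sum.elim p.1 p.2) = infinitePi fun _ : ι₁ ⊕ ι₂ => ν := by
  refine eq_infinitePi _ fun s t ht => ?_
  have hpre : (fun p : (ι₁ → α) × (ι₂ → α) => Sum.elim p.1 p.2) ⁻¹' Set.pi s t =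
      Set.pi s.toLeft (fun i => t (.inl i)) ×ˢ Set.pi s.toRight (fun i => t (.inr i)) := by
    ext p
    simp [Set.mem_pi]
  rw [Measure.map_apply measurable_sumElim_pi (.pi s.countable_toSet fun i _ => ht i), hpre,
    Measure.prod_prod, infinitePi_pi _ fun i _ => ht _, infinitePi_pi _ fun i _ => ht _,
    Finset.prod_sum_eq_prod_toLeft_mul_prod_toRight]

theorem map_comp_sumElim_prod_infinitePi {ι ι₁ ι₂ : Type*} {σ : ι → ι₁ ⊕ ι₂}
    (hσ : Function.Injective σ) :
    ((infinitePi fun _ : ι₁ => ν).prod (infinitePi fun _ : ι₂ => ν)).map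
      (fun p => Sum.elim p.1 p.2 ∘ σ) = infinitePi fun _ : ι => ν := by
  have h := map_infinitePi_infinitePi_of_inj (P := fun _ : ι₁ ⊕ ι₂ => ν) hσ
  rwa [← map_sumElim_prod_infinitePi, Measure.map_map (by fun_prop) measurable_sumElim_pi] at h

theorem map_comp_sumElim_uncurry_prod_infinitePi {ι ι₁ γ ι₂ : Type*} {σ : ι → ι₁ ⊕ γ × ι₂}
    (hσ : Function.Injective σ) :
    ((infinitePi fun _ : ι₁ => ν).prod (infinitePi fun _ : γ => infinitePi fun _ : ι₂ => ν)).map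
      (fun p => Sum.elim p.1 (Function.uncurry p.2) ∘ σ) = infinitePi fun _ : ι => ν := by
  have huncurry := infinitePi_map_curry_symm (ι := γ) (κ := ι₂) fun _ _ => ν
  rw [MeasurableEquiv.coe_curry_symm] at huncurry
  have hu : Measurable (Function.uncurry : (γ → ι₂ → α) → γ × ι₂ → α) :=
    (MeasurableEquiv.curry γ ι₂ α).symm.measurable
  have hglue : Measurable fun p : (ι₁ → α) × (γ × ι₂ → α) => Sum.elim p.1 p.2 ∘ σ :=
    (measurable_pi_lambda _ fun i => measurable_pi_apply (σ i)).comp measurable_sumElim_pi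
  rw [← map_comp_sumElim_prod_infinitePi ν hσ, ← huncurry, ← Measure.map_id (μ := infinitePi _),
    Measure.map_prod_map _ _ measurable_id hu, Measure.map_id,
    Measure.map_map hglue (measurable_id.prodMap hu)]
  rfl

theorem infinitePi_preimage_comp {ι ι' : Type*} {σ : ι → ι'} (hσ : Function.Injective σ)
    {A : Set (ι → α)} (hA : MeasurableSet A) :
    infinitePi (fun _ : ι' => ν) ((fun x i => x (σ i)) ⁻¹' A) =
      infinitePi (fun _ : ι => ν) A := by
  rw [← Measure.map_apply (by fun_prop) hA]
  exact congrArg (fun P : Measure (ι → α) => P A)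
    (map_infinitePi_infinitePi_of_inj (P := fun _ : ι' => ν) hσ)

theorem prod_infinitePi_le_infinitePi_biInter [LinearOrder α] [Nonempty α] {ι γ : Type*}
    (I : Finset ι) (Z : Finset γ) {A : γ → Set (ι → α)} (hA : ∀ z ∈ Z, MeasurableSet (A z))
    (hAl : ∀ z ∈ Z, IsLowerSet (A z)) (hAI : ∀ z ∈ Z, DependsOn (· ∈ A z) I) :
    ∏ z ∈ Z, infinitePi (fun _ => ν) (A z) ≤ infinitePi (fun _ => ν) (⋂ z ∈ Z, A z) := by
  classical
  obtain ⟨a⟩ := ‹Nonempty α›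
  -- On events that only see the coordinates in `I`, `infinitePi` agrees with the image `Q` of
  -- the finite product under the monotone section `extend` of `I.restrict`.
  let extend : (I → α) → (ι → α) := fun x i => if h : i ∈ I then x ⟨i, h⟩ else a
  have hext : Measurable extend := measurable_pi_lambda _ fun i => by
    by_cases h : i ∈ I
    · simpa [extend, h] using measurable_pi_apply _
    · simp [extend, h]
  have hextm : Monotone extend := fun x y hxy i => by
    by_cases h : i ∈ I
    · simpa [extend, h] using hxy _
    · simp [extend, h]
  let Q := (Measure.pi fun _ : I => ν).map extend
  have : IsProbabilityMeasure Q := isProbabilityMeasure_map hext.aemeasurable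
  have hPQ : ∀ B, MeasurableSet B → DependsOn (· ∈ B) I → infinitePi (fun _ => ν) B = Q B := by
    intro B hB hBI
    have hpre : I.restrict ⁻¹' (extend ⁻¹' B) = B := by
      ext w
      refine (hBI fun i hi => ?_).to_iff
      simp [extend, Finset.mem_coe.1 hi]
    conv_lhs => rw [← hpre]
    rw [Measure.map_apply hext hB, ← Measure.map_apply (Finset.measurable_restrict _) (hext hB),
      infinitePi_map_restrict]
  rw [Finset.prod_congr rfl fun z hz => hPQ _ (hA z hz) (hAI z hz),
    hPQ (⋂ z ∈ Z, A z) (.biInter Z.countable_toSet hA)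
      (dependsOn_mem_iInter fun z => dependsOn_mem_iInter fun hz => hAI z hz)]
  exact ((hasHarrisProperty_pi _).map hext hextm).prod_measure_le_measure_biInter Z hA hAl

end InfinitePi

theorem IID.measure_preimage_eq_infinitePi {Ω ι : Type*} [MeasurableSpace Ω] {μ : Measure Ω}
    {f : ι → Ω → ℝ} {ν : Measure ℝ} [IsProbabilityMeasure ν] (h : IID μ f ν)
    {A : Set (ι → ℝ)} (hA : MeasurableSet A) :
    μ ((fun o i => f i o) ⁻¹' A) = Measure.infinitePi (fun _ => ν) A := by
  rw [← Measure.map_apply (measurable_pi_lambda _ h.1) hA,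
    h.2.1.map_fun_eq_infinitePi_map h.1]
  simp_rw [h.2.2]

theorem setOf_lt_ciSup_eq_compl {Ω ι : Type*} [Finite ι] [Nonempty ι] (f : ι → Ω → ℝ) (t : ℝ) :
    {o | t < ⨆ i, f i o} = {o | ∀ i, f i o ≤ t}ᶜ := by
  ext o
  simp [lt_ciSup_iff (Set.finite_range _).bddAbove]

theorem measure_iInter_le_measure_iInter_of_monotone {E E' β γ : Type*} [MeasurableSpace E]
    [MeasurableSpace E'] [LinearOrder γ] [Finite β] {μ : Measure E} {μ' : Measure E'}
    [IsProbabilityMeasure μ] [IsProbabilityMeasure μ'] {S : γ → Set E} {S' : γ → Set E'}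
    (hS : Monotone S) (hS' : Monotone S') (h : ∀ c, μ' (S' c) ≤ μ (S c)) (c : β → γ) :
    μ' (⋂ b, S' (c b)) ≤ μ (⋂ b, S (c b)) := by
  cases isEmpty_or_nonempty β
  · simp
  obtain ⟨b₀, hb₀⟩ := Finite.exists_min c
  rw [(Set.iInter_subset _ b₀).antisymm (Set.subset_iInter fun b => hS' (hb₀ b)),
    (Set.iInter_subset _ b₀).antisymm (Set.subset_iInter fun b => hS (hb₀ b))]
  exact h _

section Paths

variable {d m n : ℕ}

theorem pos_zero (s : Fin n → Fin d × Bool) : pos s 0 = 0 := by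
  simp [pos]

theorem pos_append_of_le (b : Fin m → Fin d × Bool) (q : Fin n → Fin d × Bool) {i : ℕ}
    (hi : i ≤ m) : pos (Fin.append b q) i = pos b i := by
  simp only [pos, Finset.sum_filter, Fin.sum_univ_add, Fin.append_left, Fin.append_right,
    Fin.val_castAdd, Fin.val_natAdd]
  rw [add_eq_left]
  exact Finset.sum_eq_zero fun j _ => if_neg (by omega)

theorem pos_append_add (b : Fin m → Fin d × Bool) (q : Fin n → Fin d × Bool) (i : ℕ) :
    pos (Fin.append b q) (m + i) = pos b m + pos q i := by
  simp only [pos, Finset.sum_filter, Fin.sum_univ_add, Fin.append_left, Fin.append_right,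
    Fin.val_castAdd, Fin.val_natAdd, Nat.add_lt_add_iff_left]
  congr 1
  exact Finset.sum_congr rfl fun j _ => by simp [j.2, show (j : ℕ) < m + i by omega]

theorem forall_append_iff {X : Type*} {P : (Fin (m + n) → X) → Prop} :
    (∀ s, P s) ↔ ∀ b q, P (Fin.append b q) :=
  ⟨fun h _ _ => h _, fun h s => Fin.append_castAdd_natAdd (f := s) ▸ h _ _⟩

theorem treeWord_append_succ (b : Fin m → Fin d × Bool) (q : Fin n → Fin d × Bool) (l : ℕ) :
    treeWord m (Fin.append b q) (l + 1) = pos b m :: (treeWord m q l).map (pos b m + ·) := by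
  simp only [treeWord, List.ofFn_succ, List.map_ofFn]
  congr 1
  · rw [Fin.val_zero, zero_add, one_mul, pos_append_of_le b q le_rfl]
  · refine congrArg List.ofFn (funext fun r => ?_)
    simp only [Fin.val_succ, Function.comp_apply]
    rw [show ((r : ℕ) + 1 + 1) * m = m + ((r : ℕ) + 1) * m by ring, pos_append_add]

theorem polymerEnergy_append {Ω : Type*} (env : ℕ × (Fin d → ℤ) → Ω → ℝ)
    (b : Fin m → Fin d × Bool) (q : Fin n → Fin d × Bool) (o : Ω) :
    polymerEnergy (m + n) env (Fin.append b q) o =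
      polymerEnergy m env b o + polymerEnergy n (fun x => env (m + x.1, pos b m + x.2)) q o := by
  simp only [polymerEnergy, Finset.sum_range_add]
  congr 1
  · exact Finset.sum_congr rfl fun i hi => by
      rw [pos_append_of_le b q (by simp at hi; omega)]
  · exact Finset.sum_congr rfl fun i _ => by rw [← pos_append_add]; rfl

theorem treeEnergy_append {Ω : Type*} (k : ℕ)
    (envT : List (Fin d → ℤ) × ℕ × (Fin d → ℤ) → Ω → ℝ)
    (b : Fin m → Fin d × Bool) (q : Fin n → Fin d × Bool) (o : Ω) :
    treeEnergy (m + n) m (k + 1) envT (Fin.append b q) o =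
      polymerEnergy m (fun x => envT ([], x)) b o +
        treeEnergy n m k (fun x => envT (pos b m :: x.1.map (pos b m + ·), x.2)) q o := by
  simp only [treeEnergy, polymerEnergy, Finset.sum_range_succ']
  rw [add_comm]
  congr 1
  · refine Finset.sum_congr rfl fun j hj => ?_
    simp only [treeWord, zero_mul, zero_add, pos_zero, sub_zero, List.ofFn_zero]
    rw [pos_append_of_le b q (by simp at hj; omega)]
  · refine Finset.sum_congr rfl fun l _ => Finset.sum_congr rfl fun j _ => ?_
    rw [treeWord_append_succ, show (l + 1) * m + (j + 1) = m + (l * m + (j + 1)) by ring,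
      show (l + 1) * m = m + l * m by ring, pos_append_add, pos_append_add,
      add_sub_add_left_eq_sub]

end Paths

section Environments

abbrev Site (d : ℕ) : Type := ℕ × (Fin d → ℤ)

abbrev TreeSite (d : ℕ) : Type := List (Fin d → ℤ) × ℕ × (Fin d → ℤ)

variable {d : ℕ}

def polymerBelow (d n : ℕ) (t : ℝ) : Set (Site d → ℝ) :=
  {w | ∀ s : Fin n → Fin d × Bool, polymerEnergy n (fun x w => w x) s w ≤ t}

def treeBelow (d n m k : ℕ) (t : ℝ) : Set (TreeSite d → ℝ) :=
  {w | ∀ s : Fin n → Fin d × Bool, treeEnergy n m k (fun x w => w x) s w ≤ t}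

theorem measurableSet_polymerBelow (n : ℕ) (t : ℝ) : MeasurableSet (polymerBelow d n t) := by
  rw [polymerBelow, Set.ofPred_forall]
  exact .iInter fun _ => measurableSet_le
    (Finset.measurable_sum _ fun _ _ => measurable_pi_apply _) measurable_const

theorem measurableSet_treeBelow (n m k : ℕ) (t : ℝ) : MeasurableSet (treeBelow d n m k t) := by
  rw [treeBelow, Set.ofPred_forall]
  exact .iInter fun _ => measurableSet_le (Finset.measurable_sum _ fun _ _ =>
    Finset.measurable_sum _ fun _ _ => measurable_pi_apply _) measurable_const

theorem polymerBelow_mono (n : ℕ) : Monotone (polymerBelow d n) :=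
  fun _ _ h _ hw s => (hw s).trans h

theorem treeBelow_mono (n m k : ℕ) : Monotone (treeBelow d n m k) :=
  fun _ _ h _ hw s => (hw s).trans h

theorem isLowerSet_polymerBelow (n : ℕ) (t : ℝ) : IsLowerSet (polymerBelow d n t) :=
  fun _ _ hvw hw s => le_trans (Finset.sum_le_sum fun _ _ => hvw _) (hw s)

def polymerSites (d n : ℕ) : Finset (Site d) :=
  Finset.univ.image fun p : (Fin n → Fin d × Bool) × Fin n =>
    ((p.2 : ℕ) + 1, pos p.1 (p.2 + 1))

theorem dependsOn_mem_polymerBelow (n : ℕ) (t : ℝ) :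
    DependsOn (· ∈ polymerBelow d n t) (polymerSites d n) := fun v w h => by
  have hE : ∀ s, polymerEnergy n (fun x w => w x) s v = polymerEnergy n (fun x w => w x) s w :=
    fun s => Finset.sum_congr rfl fun i hi => h _ <| Finset.mem_coe.2 <|
      Finset.mem_image.2 ⟨(s, ⟨i, Finset.mem_range.1 hi⟩), Finset.mem_univ _, rfl⟩
  change (∀ s, _ ≤ t) = ∀ s, _ ≤ t
  simp only [hE]

def translateSite (z : Fin d → ℤ) (x : Site d) : Site d := (x.1, z + x.2)

theorem translateSite_injective (z : Fin d → ℤ) : Function.Injective (translateSite z) :=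
  fun x y h => by simpa [translateSite, Prod.ext_iff] using h

def splitSite (m : ℕ) (x : Site d) : Site d ⊕ Site d :=
  if x.1 ≤ m then .inl x else .inr (x.1 - m, x.2)

theorem splitSite_injective (m : ℕ) : Function.Injective (splitSite (d := d) m) := by
  rintro ⟨i, y⟩ ⟨j, z⟩ h
  simp only [splitSite] at h
  split_ifs at h with hi hj hj <;> simp only [Sum.inl.injEq, Sum.inr.injEq, Prod.mk.injEq] at h
  · rw [h.1, h.2]
  · rw [h.2, show i = j by omega]

def polymerGlue (m : ℕ) (p : (Site d → ℝ) × (Site d → ℝ)) : Site d → ℝ :=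
  Sum.elim p.1 p.2 ∘ splitSite m

def splitTreeSite : TreeSite d → Site d ⊕ (Fin d → ℤ) × TreeSite d
  | ([], x) => .inl x
  | (z :: word, x) => .inr (z, word.map (-z + ·), x)

theorem splitTreeSite_injective : Function.Injective (splitTreeSite (d := d)) := by
  rintro ⟨_ | ⟨z, u⟩, x⟩ ⟨_ | ⟨z', u'⟩, x'⟩ h <;> simp only [splitTreeSite, Sum.inl.injEq,
    Sum.inr.injEq, Prod.mk.injEq, reduceCtorEq] at h
  · rw [h]
  · obtain ⟨rfl, hu, rfl⟩ := h
    rw [List.map_injective_iff.2 (add_right_injective (-z)) hu]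

/-- `V z` is the environment of the subtree below the first-block endpoint `z`, recentred at `z`. -/
def treeGlue (p : (Site d → ℝ) × ((Fin d → ℤ) → TreeSite d → ℝ)) : TreeSite d → ℝ :=
  Sum.elim p.1 (Function.uncurry p.2) ∘ splitTreeSite

theorem measurable_polymerGlue (m : ℕ) : Measurable (polymerGlue (d := d) m) :=
  (measurable_pi_lambda _ fun x => measurable_pi_apply (splitSite m x)).comp measurable_sumElim_pi

theorem measurable_treeGlue : Measurable (treeGlue (d := d)) :=
  (measurable_pi_lambda _ fun x => measurable_pi_apply (splitTreeSite x)).comp <|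
    measurable_sumElim_pi.comp <|
      measurable_id.prodMap (MeasurableEquiv.curry _ _ ℝ).symm.measurable

variable {m n : ℕ}

theorem polymerEnergy_polymerGlue (u v : Site d → ℝ) (b : Fin m → Fin d × Bool)
    (q : Fin n → Fin d × Bool) :
    polymerEnergy (m + n) (fun x w => w x) (Fin.append b q) (polymerGlue m (u, v)) =
      polymerEnergy m (fun x w => w x) b u +
        polymerEnergy n (fun x w => w x) q (fun x => v (translateSite (pos b m) x)) := by
  rw [polymerEnergy_append]
  congr 1 <;> refine Finset.sum_congr rfl fun i hi => ?_ <;> simp at hi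
  · simp [polymerGlue, splitSite, show i + 1 ≤ m by omega]
  · simp [polymerGlue, splitSite, translateSite]

theorem treeEnergy_treeGlue (k : ℕ) (u : Site d → ℝ) (V : (Fin d → ℤ) → TreeSite d → ℝ)
    (b : Fin m → Fin d × Bool) (q : Fin n → Fin d × Bool) :
    treeEnergy (m + n) m (k + 1) (fun x w => w x) (Fin.append b q) (treeGlue (u, V)) =
      polymerEnergy m (fun x w => w x) b u + treeEnergy n m k (fun x w => w x) q (V (pos b m)) := by
  rw [treeEnergy_append]
  congr 1
  simp [treeEnergy, treeGlue, splitTreeSite, Function.comp_def]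

end Environments

section Comparison

open Measure

variable {d m : ℕ} (ν : Measure ℝ) [IsProbabilityMeasure ν]

theorem map_polymerGlue (m : ℕ) :
    ((infinitePi fun _ : Site d => ν).prod (infinitePi fun _ => ν)).map (polymerGlue m) =
      infinitePi fun _ => ν :=
  map_comp_sumElim_prod_infinitePi ν (splitSite_injective m)

theorem map_treeGlue :
    ((infinitePi fun _ : Site d => ν).prod (infinitePi fun _ => infinitePi fun _ => ν)).map
      treeGlue = infinitePi fun _ : TreeSite d => ν :=
  map_comp_sumElim_uncurry_prod_infinitePi ν splitTreeSite_injective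

def endpoints (d m : ℕ) : Finset (Fin d → ℤ) :=
  Finset.univ.image fun b : Fin m → Fin d × Bool => pos b m

def continuationBelow {E : Type*} (S : ℝ → Set E) (m : ℕ) (u : Site d → ℝ) (t : ℝ)
    (z : Fin d → ℤ) : Set E :=
  ⋂ b : {b : Fin m → Fin d × Bool // pos b m = z}, S (t - polymerEnergy m (fun x w => w x) b.1 u)

theorem measurableSet_continuationBelow {E : Type*} [MeasurableSpace E] {S : ℝ → Set E}
    (hS : ∀ c, MeasurableSet (S c)) (u : Site d → ℝ) (t : ℝ) (z : Fin d → ℤ) :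
    MeasurableSet (continuationBelow S m u t z) :=
  .iInter fun _ => hS _

theorem forall_mem_iff_forall_endpoints {E : Type*} (S : ℝ → Set E) (u : Site d → ℝ) (t : ℝ)
    (e : (Fin d → ℤ) → E) :
    (∀ b : Fin m → Fin d × Bool, e (pos b m) ∈ S (t - polymerEnergy m (fun x w => w x) b u)) ↔
      ∀ z ∈ endpoints d m, e z ∈ continuationBelow S m u t z := by
  simp only [endpoints, Finset.mem_image, Finset.mem_univ, true_and, continuationBelow,
    Set.mem_iInter, forall_exists_index, Subtype.forall]
  exact ⟨fun h z b hb b' hb' => hb' ▸ h b', fun h b => h _ b rfl b rfl⟩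

theorem polymerGlue_mem_polymerBelow_iff {n : ℕ} (u v : Site d → ℝ) (t : ℝ) :
    polymerGlue m (u, v) ∈ polymerBelow d (m + n) t ↔ ∀ z ∈ endpoints d m,
      (fun x => v (translateSite z x)) ∈ continuationBelow (polymerBelow d n) m u t z := by
  rw [← forall_mem_iff_forall_endpoints]
  change (∀ s, _ ≤ t) ↔ _
  simp only [forall_append_iff, polymerEnergy_polymerGlue, ← le_sub_iff_add_le']
  rfl

theorem treeGlue_mem_treeBelow_iff {n k : ℕ} (u : Site d → ℝ) (V : (Fin d → ℤ) → TreeSite d → ℝ)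
    (t : ℝ) :
    treeGlue (u, V) ∈ treeBelow d (m + n) m (k + 1) t ↔
      ∀ z ∈ endpoints d m, V z ∈ continuationBelow (treeBelow d n m k) m u t z := by
  rw [← forall_mem_iff_forall_endpoints]
  change (∀ s, _ ≤ t) ↔ _
  simp only [forall_append_iff, treeEnergy_treeGlue, ← le_sub_iff_add_le']
  rfl

theorem infinitePi_polymerBelow_add (n : ℕ) (t : ℝ) :
    infinitePi (fun _ => ν) (polymerBelow d (m + n) t) =
      ∫⁻ u, infinitePi (fun _ => ν) (⋂ z ∈ endpoints d m, (fun v x => v (translateSite z x)) ⁻¹'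
        continuationBelow (polymerBelow d n) m u t z) ∂infinitePi fun _ => ν := by
  have hglue := measurable_polymerGlue (d := d) m (measurableSet_polymerBelow (m + n) t)
  conv_lhs => rw [← map_polymerGlue ν m, map_apply (measurable_polymerGlue m)
    (measurableSet_polymerBelow _ _), Measure.prod_apply hglue]
  refine lintegral_congr fun u => congrArg _ (Set.ext fun v => ?_)
  simpa using polymerGlue_mem_polymerBelow_iff u v t

theorem infinitePi_treeBelow_add (n k : ℕ) (t : ℝ) :
    infinitePi (fun _ => ν) (treeBelow d (m + n) m (k + 1) t) =
      ∫⁻ u, ∏ z ∈ endpoints d m, infinitePi (fun _ => ν)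
        (continuationBelow (treeBelow d n m k) m u t z) ∂infinitePi fun _ => ν := by
  have hglue := measurable_treeGlue (d := d) (measurableSet_treeBelow (m + n) m (k + 1) t)
  conv_lhs => rw [← map_treeGlue ν, map_apply measurable_treeGlue
    (measurableSet_treeBelow _ _ _ _), Measure.prod_apply hglue]
  refine lintegral_congr fun u => ?_
  rw [← infinitePi_pi _ fun z _ =>
    measurableSet_continuationBelow (measurableSet_treeBelow _ _ _) _ _ z]
  exact congrArg _ (Set.ext fun V => by simpa using treeGlue_mem_treeBelow_iff u V t)

theorem prod_le_infinitePi_continuationBelow (n : ℕ) (u : Site d → ℝ) (t : ℝ) :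
    ∏ z ∈ endpoints d m, infinitePi (fun _ => ν) (continuationBelow (polymerBelow d n) m u t z) ≤
      infinitePi (fun _ => ν) (⋂ z ∈ endpoints d m, (fun v x => v (translateSite z x)) ⁻¹'
        continuationBelow (polymerBelow d n) m u t z) := by
  have hmeas (z : Fin d → ℤ) : MeasurableSet (continuationBelow (polymerBelow d n) m u t z) :=
    measurableSet_continuationBelow (measurableSet_polymerBelow n) u t z
  rw [Finset.prod_congr rfl fun z _ =>
    (infinitePi_preimage_comp ν (translateSite_injective z) (hmeas z)).symm]
  refine prod_infinitePi_le_infinitePi_biInter ν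
    ((endpoints d m).biUnion fun z => (polymerSites d n).image (translateSite z)) _
    (fun z _ => (measurable_pi_lambda _ fun _ => measurable_pi_apply _) (hmeas z))
    (fun z _ => (isLowerSet_iInter fun _ => isLowerSet_polymerBelow n _).preimage
      fun v w h x => h _)
    (fun z hz => (dependsOn_mem_preimage_comp (dependsOn_mem_iInter fun _ =>
      dependsOn_mem_polymerBelow n _) (translateSite z)).mono fun x hx => ?_)
  simp only [Finset.coe_biUnion, Finset.coe_image, Set.mem_iUnion]
  exact ⟨z, hz, hx⟩

theorem infinitePi_treeBelow_le_polymerBelow_add {n k : ℕ}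
    (hle : ∀ t, infinitePi (fun _ => ν) (treeBelow d n m k t) ≤
      infinitePi (fun _ => ν) (polymerBelow d n t)) (t : ℝ) :
    infinitePi (fun _ => ν) (treeBelow d (m + n) m (k + 1) t) ≤
      infinitePi (fun _ => ν) (polymerBelow d (m + n) t) := by
  rw [infinitePi_treeBelow_add, infinitePi_polymerBelow_add]
  refine lintegral_mono fun u => le_trans ?_ (prod_le_infinitePi_continuationBelow ν n u t)
  exact Finset.prod_le_prod' fun z _ => measure_iInter_le_measure_iInter_of_monotone
    (polymerBelow_mono n) (treeBelow_mono n m k) hle _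

theorem infinitePi_treeBelow_le_polymerBelow (k : ℕ) (t : ℝ) :
    infinitePi (fun _ => ν) (treeBelow d (k * m) m k t) ≤
      infinitePi (fun _ => ν) (polymerBelow d (k * m) t) := by
  induction k generalizing t with
  | zero =>
    simp only [zero_mul]
    rcases le_or_gt 0 t with ht | ht
    · have hall : polymerBelow d 0 t = Set.univ :=
        Set.eq_univ_of_forall fun w s => by simpa [polymerEnergy] using ht
      rw [hall, measure_univ]
      exact prob_le_one
    · have hnone : treeBelow d 0 m 0 t = ∅ :=
        Set.eq_empty_of_forall_notMem fun w hw => by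
          simpa [treeEnergy] using (hw finZeroElim).trans_lt ht
      simp [hnone]
  | succ k ih =>
    rw [show (k + 1) * m = m + k * m by ring]
    exact infinitePi_treeBelow_le_polymerBelow_add ν ih t

end Comparison

theorem gaussian_maxEnergy_stochOrder_general
    {Ω : Type*} [MeasurableSpace Ω] (μ : Measure Ω) [IsProbabilityMeasure μ]
    (d m k : ℕ) (hd : 1 ≤ d) (n : ℕ) (hn : n = k * m)
    (env : ℕ × (Fin d → ℤ) → Ω → ℝ) (henv : IID μ env (gaussianReal 0 1))
    (envT : List (Fin d → ℤ) × ℕ × (Fin d → ℤ) → Ω → ℝ)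
    (henvT : IID μ envT (gaussianReal 0 1)) :
    ∀ t : ℝ,
      μ {o | t < ⨆ s : Fin n → Fin d × Bool, polymerEnergy n env s o}
        ≤ μ {o | t < ⨆ s : Fin n → Fin d × Bool, treeEnergy n m k envT s o} := by
  intro t
  subst hn
  have : Nonempty (Fin (k * m) → Fin d × Bool) := ⟨fun _ => (⟨0, hd⟩, true)⟩
  rw [setOf_lt_ciSup_eq_compl, setOf_lt_ciSup_eq_compl]
  change μ ((fun o x => env x o) ⁻¹' polymerBelow d (k * m) t)ᶜ ≤
    μ ((fun o x => envT x o) ⁻¹' treeBelow d (k * m) m k t)ᶜ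
  rw [prob_compl_eq_one_sub ((measurable_pi_lambda _ henv.1) (measurableSet_polymerBelow _ _)),
    prob_compl_eq_one_sub ((measurable_pi_lambda _ henvT.1) (measurableSet_treeBelow _ _ _ _)),
    henv.measure_preimage_eq_infinitePi (measurableSet_polymerBelow _ _),
    henvT.measure_preimage_eq_infinitePi (measurableSet_treeBelow _ _ _ _)]
  exact tsub_le_tsub_left (infinitePi_treeBelow_le_polymerBelow _ k t) 1

/-- For `d, m ≥ 1` and `n = k m`, if the environment variables and the
`m`-tree environment copies are i.i.d. standard Gaussians, then the maximal polymer energy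
is stochastically dominated by the maximal `m`-tree energy:
`ℙ(max_{x∈Π_n} H_n(x) > t) ≤ ℙ(max_{x∈Π_n} H_n^{m-tree}(x) > t)` for every `t ∈ ℝ`. -/
theorem gaussian_maxEnergy_stochOrder
    {Ω : Type*} [MeasurableSpace Ω] (μ : Measure Ω) [IsProbabilityMeasure μ]
    (d m k : ℕ) (hd : 1 ≤ d) (hm : 1 ≤ m) (hk : 1 ≤ k) (n : ℕ) (hn : n = k * m)
    (env : ℕ × (Fin d → ℤ) → Ω → ℝ) (henv : IID μ env (gaussianReal 0 1))
    (envT : List (Fin d → ℤ) × ℕ × (Fin d → ℤ) → Ω → ℝ)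
    (henvT : IID μ envT (gaussianReal 0 1)) :
    ∀ t : ℝ,
      μ {o | t < ⨆ s : Fin n → Fin d × Bool, polymerEnergy n env s o}
        ≤ μ {o | t < ⨆ s : Fin n → Fin d × Bool, treeEnergy n m k envT s o} :=
  gaussian_maxEnergy_stochOrder_general μ d m k hd n hn env henv envT henvT
end
end

section
/- Let X and Y be nonnegative integrable random variables with X ≤_Lt Y and 𝔼[X] = 𝔼[Y], and suppose X log X and Y log Y are integrable (with the convention 0 log 0 = 0). Then 𝔼[X log X] ≥ 𝔼[Y log Y]. -/
/-!
The kernel `xLogXKernel t x = (e^{-tx} - e^{-t} + t (x - 1) e^{-t}) / t²` is nonnegative, because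
`e^{-t} - t (x - 1) e^{-t}` is the tangent line of the convex function `x ↦ e^{-tx}` at `x = 1`.
Its `x`-derivative `logKernel x t = (e^{-t} - e^{-tx}) / t` integrates over `t > 0` to `log x`
(Frullani), so `∫₀^∞ xLogXKernel t x dt = ∫₁^x log u du = x log x - x + 1`. In `x` the kernel is
`e^{-tx} / t²` plus an affine function, so equal means and the Laplace order give
`𝔼 xLogXKernel t Y ≤ 𝔼 xLogXKernel t X` for every `t > 0`; integrating over `t` (Tonelli) gives
`𝔼[Y log Y] ≤ 𝔼[X log X]`.
-/

open MeasureTheory Set Real Filter Topology Interval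

noncomputable def logKernel (u t : ℝ) : ℝ := (exp (-t) - exp (-t * u)) / t

lemma abs_exp_neg_sub_exp_neg_le (a b : ℝ) :
    |exp (-a) - exp (-b)| ≤ |b - a| * exp (-min a b) := by
  wlog hab : a ≤ b generalizing a b
  · rw [abs_sub_comm, abs_sub_comm b, min_comm]
    exact this b a (le_of_not_ge hab)
  have hexp : exp (-b) = exp (-a) * exp (-(b - a)) := by rw [← exp_add]; ring_nf
  have hlin := add_one_le_exp (-(b - a))
  rw [abs_of_nonneg (sub_nonneg.2 (exp_le_exp.2 (neg_le_neg hab))),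
    abs_of_nonneg (sub_nonneg.2 hab), min_eq_left hab, hexp]
  nlinarith [exp_pos (-a)]

lemma abs_logKernel_le {u t : ℝ} (ht : 0 < t) :
    |logKernel u t| ≤ |u - 1| * exp (-min 1 u * t) := by
  have hmin : min t (t * u) = min 1 u * t := by
    rw [min_mul_of_nonneg _ _ ht.le, one_mul, mul_comm u]
  rw [logKernel, abs_div, abs_of_pos ht, div_le_iff₀ ht]
  calc |exp (-t) - exp (-t * u)| ≤ |t * u - t| * exp (-min t (t * u)) := by
        simpa only [neg_mul] using abs_exp_neg_sub_exp_neg_le t (t * u)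
    _ = |u - 1| * exp (-min 1 u * t) * t := by
        rw [hmin, ← mul_sub_one, abs_mul, abs_of_pos ht, neg_mul]; ring

lemma integrableOn_logKernel {u : ℝ} (hu : 0 < u) : IntegrableOn (logKernel u) (Ioi 0) := by
  refine Integrable.mono' ((exp_neg_integrableOn_Ioi 0 (lt_min one_pos hu)).const_mul |u - 1|)
    (by unfold logKernel; exact Measurable.aestronglyMeasurable (by fun_prop)) ?_
  filter_upwards [ae_restrict_mem measurableSet_Ioi] with t ht
  exact abs_logKernel_le ht

lemma integral_logKernel {u : ℝ} (hu : 0 < u) : ∫ t in Ioi 0, logKernel u t = log u := by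
  have hfun : logKernel u = fun t => t⁻¹ • (exp (-(1 * t)) - exp (-(u * t))) := by
    ext t; simp only [logKernel, smul_eq_mul, one_mul, div_eq_inv_mul, mul_comm u, neg_mul]
  have hL : Tendsto (fun s => exp (-s)) (𝓝[>] 0) (𝓝 1) :=
    ((continuous_exp.comp continuous_neg).tendsto' 0 1 (by simp)).mono_left nhdsWithin_le_nhds
  have hR : Tendsto (fun s => exp (-s)) atTop (𝓝 0) := tendsto_exp_neg_atTop_nhds_zero
  have h := Frullani.integral_Ioi_eq (f := fun s => exp (-s))
    ((continuous_exp.comp continuous_neg).locallyIntegrable.locallyIntegrableOn _) one_pos hu hL hR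
    (by simpa only [← hfun] using integrableOn_logKernel hu)
  rw [hfun]
  simpa using h

lemma logKernel_nonneg {u t : ℝ} (hu : 1 ≤ u) (ht : 0 < t) : 0 ≤ logKernel u t :=
  div_nonneg (sub_nonneg.2 (exp_le_exp.2 (by nlinarith))) ht.le

lemma logKernel_nonpos {u t : ℝ} (hu : u ≤ 1) (ht : 0 < t) : logKernel u t ≤ 0 :=
  div_nonpos_of_nonpos_of_nonneg (sub_nonpos.2 (exp_le_exp.2 (by nlinarith))) ht.le

lemma integral_abs_logKernel {u : ℝ} (hu : 0 < u) :
    ∫ t in Ioi 0, |logKernel u t| = |log u| := by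
  rcases le_total 1 u with h | h
  · rw [setIntegral_congr_fun measurableSet_Ioi fun t ht => abs_of_nonneg (logKernel_nonneg h ht),
      integral_logKernel hu, abs_of_nonneg (log_nonneg h)]
  · rw [setIntegral_congr_fun measurableSet_Ioi fun t ht => abs_of_nonpos (logKernel_nonpos h ht),
      integral_neg, integral_logKernel hu, abs_of_nonpos (log_nonpos hu.le h)]

lemma integrable_uncurry_logKernel {x : ℝ} (hx : 0 ≤ x) :
    Integrable (Function.uncurry logKernel)
      ((volume.restrict (Ι 1 x)).prod (volume.restrict (Ioi 0))) := by
  have hpos : ∀ u ∈ Ι 1 x, 0 < u := fun u hu => by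
    rcases mem_uIoc.1 hu with ⟨h, -⟩ | ⟨h, -⟩ <;> linarith
  rw [integrable_prod_iff (by unfold logKernel; exact Measurable.aestronglyMeasurable (by fun_prop))]
  constructor
  · filter_upwards [ae_restrict_mem measurableSet_uIoc] with u hu
    exact integrableOn_logKernel (hpos u hu)
  · refine (intervalIntegrable_iff.1 intervalIntegral.intervalIntegrable_log').norm.congr ?_
    filter_upwards [ae_restrict_mem measurableSet_uIoc] with u hu
    simp only [Function.uncurry_apply_pair, norm_eq_abs]
    exact (integral_abs_logKernel (hpos u hu)).symm

noncomputable def xLogXKernel (t x : ℝ) : ℝ :=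
  (exp (-t * x) - exp (-t) + t * (x - 1) * exp (-t)) / t ^ 2

lemma xLogXKernel_nonneg (t x : ℝ) : 0 ≤ xLogXKernel t x := by
  have hexp : exp (-t * x) = exp (-t) * exp (-(t * (x - 1))) := by rw [← exp_add]; ring_nf
  have hlin := add_one_le_exp (-(t * (x - 1)))
  refine div_nonneg ?_ (sq_nonneg t)
  rw [hexp]
  nlinarith [exp_pos (-t)]

lemma xLogXKernel_eq_exp_add_affine (t x : ℝ) :
    xLogXKernel t x = (exp (-t * x) + t * exp (-t) * x - (1 + t) * exp (-t)) / t ^ 2 := by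
  rw [xLogXKernel]; ring

lemma hasDerivAt_xLogXKernel {t : ℝ} (ht : t ≠ 0) (x : ℝ) :
    HasDerivAt (xLogXKernel t) (logKernel x t) x := by
  have h1 : HasDerivAt (fun x => exp (-t * x)) (exp (-t * x) * (-t)) x := by
    simpa using ((hasDerivAt_id x).const_mul (-t)).exp
  have h2 : HasDerivAt (fun x => t * (x - 1) * exp (-t)) (t * exp (-t)) x := by
    simpa using (((hasDerivAt_id x).sub_const 1).const_mul t).mul_const (exp (-t))
  refine (((h1.sub_const (exp (-t))).add h2).div_const (t ^ 2)).congr_deriv ?_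
  rw [logKernel]
  field_simp
  ring

lemma xLogXKernel_eq_intervalIntegral {t : ℝ} (ht : t ≠ 0) (x : ℝ) :
    xLogXKernel t x = ∫ u in 1..x, logKernel u t := by
  have hcont : Continuous fun u => logKernel u t := by unfold logKernel; fun_prop
  rw [intervalIntegral.integral_eq_sub_of_hasDerivAt (fun u _ => hasDerivAt_xLogXKernel ht u)
    (hcont.intervalIntegrable _ _)]
  simp [xLogXKernel]

lemma integrableOn_xLogXKernel {x : ℝ} (hx : 0 ≤ x) :
    IntegrableOn (fun t => xLogXKernel t x) (Ioi 0) := by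
  refine IntegrableOn.congr_fun ?_
    (fun t ht => (xLogXKernel_eq_intervalIntegral (ne_of_gt ht) x).symm) measurableSet_Ioi
  simp_rw [intervalIntegral.intervalIntegral_eq_integral_uIoc, smul_eq_mul]
  exact (integrable_uncurry_logKernel hx).integral_prod_right.const_mul _

lemma integral_xLogXKernel {x : ℝ} (hx : 0 ≤ x) :
    ∫ t in Ioi 0, xLogXKernel t x = x * log x - x + 1 := by
  rw [setIntegral_congr_fun measurableSet_Ioi
      fun t ht => xLogXKernel_eq_intervalIntegral (ne_of_gt ht) x,
    ← intervalIntegral_integral_swap (integrable_uncurry_logKernel hx),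
    intervalIntegral.integral_congr_ae (g := log) ?_, integral_log]
  · simp
  · filter_upwards with u hu
    exact integral_logKernel (by rcases mem_uIoc.1 hu with ⟨h, -⟩ | ⟨h, -⟩ <;> linarith)

section Expectation

variable {Ω : Type*} [MeasurableSpace Ω] {μ : Measure Ω} {Z : Ω → ℝ}

lemma integrable_exp_neg_mul [IsFiniteMeasure μ] (hZ : AEMeasurable Z μ) (hZ0 : 0 ≤ᵐ[μ] Z)
    {t : ℝ} (ht : 0 ≤ t) : Integrable (fun ω => exp (-t * Z ω)) μ := by
  refine Integrable.mono' (integrable_const 1) (by fun_prop) ?_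
  filter_upwards [hZ0] with ω hω
  rw [norm_eq_abs, abs_exp, exp_le_one_iff, neg_mul]
  exact neg_nonpos.2 (mul_nonneg ht hω)

lemma integrable_xLogXKernel_comp [IsFiniteMeasure μ] (hZ : Integrable Z μ) {t : ℝ}
    (hexp : Integrable (fun ω => exp (-t * Z ω)) μ) :
    Integrable (fun ω => xLogXKernel t (Z ω)) μ := by
  simp_rw [xLogXKernel_eq_exp_add_affine]
  exact ((hexp.add (hZ.const_mul _)).sub (integrable_const _)).div_const _

lemma integral_xLogXKernel_comp [IsProbabilityMeasure μ] (hZ : Integrable Z μ) {t : ℝ}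
    (hexp : Integrable (fun ω => exp (-t * Z ω)) μ) :
    ∫ ω, xLogXKernel t (Z ω) ∂μ =
      (∫ ω, exp (-t * Z ω) ∂μ + t * exp (-t) * ∫ ω, Z ω ∂μ - (1 + t) * exp (-t)) / t ^ 2 := by
  simp_rw [xLogXKernel_eq_exp_add_affine]
  rw [integral_div, integral_sub, integral_add hexp (hZ.const_mul _), integral_const_mul,
    integral_const, probReal_univ, one_smul]
  · exact hexp.add (hZ.const_mul _)
  · exact integrable_const _

lemma integral_sub_one_le_integral_mul_log [IsProbabilityMeasure μ] (hZ0 : 0 ≤ᵐ[μ] Z)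
    (hZ : Integrable Z μ) (hZlog : Integrable (fun ω => Z ω * log (Z ω)) μ) :
    ∫ ω, Z ω ∂μ - 1 ≤ ∫ ω, Z ω * log (Z ω) ∂μ := by
  have h := integral_mono_ae (f := fun ω => Z ω - 1) (hZ.sub (integrable_const 1)) hZlog
    (hZ0.mono fun ω hω => self_sub_one_le_mul_log hω)
  rwa [integral_sub hZ (integrable_const 1), integral_const, probReal_univ, one_smul] at h

lemma lintegral_integral_xLogXKernel_comp [IsProbabilityMeasure μ] (hZ0 : 0 ≤ᵐ[μ] Z)
    (hZ : Integrable Z μ) (hZlog : Integrable (fun ω => Z ω * log (Z ω)) μ) :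
    ∫⁻ t in Ioi 0, ENNReal.ofReal (∫ ω, xLogXKernel t (Z ω) ∂μ) =
      ENNReal.ofReal (∫ ω, Z ω * log (Z ω) ∂μ - ∫ ω, Z ω ∂μ + 1) := by
  have hmeas : AEMeasurable (fun p : ℝ × Ω => ENNReal.ofReal (xLogXKernel p.1 (Z p.2)))
      ((volume.restrict (Ioi 0)).prod μ) := by
    have hZ' : AEMeasurable (fun p : ℝ × Ω => Z p.2) ((volume.restrict (Ioi 0)).prod μ) :=
      hZ.aemeasurable.comp_snd
    unfold xLogXKernel; fun_prop
  calc ∫⁻ t in Ioi 0, ENNReal.ofReal (∫ ω, xLogXKernel t (Z ω) ∂μ)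
      = ∫⁻ t in Ioi 0, ∫⁻ ω, ENNReal.ofReal (xLogXKernel t (Z ω)) ∂μ :=
        setLIntegral_congr_fun measurableSet_Ioi fun t ht =>
          ofReal_integral_eq_lintegral_ofReal
            (integrable_xLogXKernel_comp hZ (integrable_exp_neg_mul hZ.aemeasurable hZ0 ht.le))
            (ae_of_all _ fun ω => xLogXKernel_nonneg _ _)
    _ = ∫⁻ ω, (∫⁻ t in Ioi 0, ENNReal.ofReal (xLogXKernel t (Z ω))) ∂μ :=
        lintegral_lintegral_swap hmeas
    _ = ∫⁻ ω, ENNReal.ofReal (Z ω * log (Z ω) - Z ω + 1) ∂μ := by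
        refine lintegral_congr_ae (hZ0.mono fun ω hω => ?_)
        dsimp only
        rw [← integral_xLogXKernel hω, ofReal_integral_eq_lintegral_ofReal
          (integrableOn_xLogXKernel hω) (ae_of_all _ fun t => xLogXKernel_nonneg _ _)]
    _ = ENNReal.ofReal (∫ ω, Z ω * log (Z ω) ∂μ - ∫ ω, Z ω ∂μ + 1) := by
        rw [← ofReal_integral_eq_lintegral_ofReal (f := fun ω => Z ω * log (Z ω) - Z ω + 1)
          ((hZlog.sub hZ).add (integrable_const 1))
          (hZ0.mono fun ω hω => show 0 ≤ Z ω * log (Z ω) - Z ω + 1 by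
            linarith [self_sub_one_le_mul_log hω]),
          integral_add (f := fun ω => Z ω * log (Z ω) - Z ω) (hZlog.sub hZ) (integrable_const 1),
          integral_sub hZlog hZ, integral_const, probReal_univ, one_smul]

end Expectation

theorem xLogX_ge_of_laplaceOrder_general
    {Ω : Type*} [MeasurableSpace Ω] (μ : Measure Ω) [IsProbabilityMeasure μ]
    (X Y : Ω → ℝ)
    (hXpos : ∀ o, 0 ≤ X o) (hYpos : ∀ o, 0 ≤ Y o)
    (hXint : Integrable X μ) (hYint : Integrable Y μ)
    (hLt : ∀ lam : ℝ, 0 ≤ lam →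
      ∫ o, Real.exp (-lam * Y o) ∂μ ≤ ∫ o, Real.exp (-lam * X o) ∂μ)
    (hmean : ∫ o, X o ∂μ = ∫ o, Y o ∂μ)
    (hXlog : Integrable (fun o => X o * Real.log (X o)) μ)
    (hYlog : Integrable (fun o => Y o * Real.log (Y o)) μ) :
    ∫ o, Y o * Real.log (Y o) ∂μ ≤ ∫ o, X o * Real.log (X o) ∂μ := by
  have hX0 : 0 ≤ᵐ[μ] X := ae_of_all _ hXpos
  have hY0 : 0 ≤ᵐ[μ] Y := ae_of_all _ hYpos
  have hkernel : ∀ t ∈ Ioi (0 : ℝ),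
      ∫ o, xLogXKernel t (Y o) ∂μ ≤ ∫ o, xLogXKernel t (X o) ∂μ := fun t ht => by
    rw [integral_xLogXKernel_comp hYint (integrable_exp_neg_mul hYint.aemeasurable hY0 ht.le),
      integral_xLogXKernel_comp hXint (integrable_exp_neg_mul hXint.aemeasurable hX0 ht.le), hmean]
    exact div_le_div_of_nonneg_right (by linarith [hLt t ht.le]) (sq_nonneg t)
  have h := setLIntegral_mono' (μ := volume) measurableSet_Ioi
    fun t ht => ENNReal.ofReal_le_ofReal (hkernel t ht)
  rw [lintegral_integral_xLogXKernel_comp hY0 hYint hYlog,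
    lintegral_integral_xLogXKernel_comp hX0 hXint hXlog, ENNReal.ofReal_le_ofReal_iff
      (by linarith [integral_sub_one_le_integral_mul_log hX0 hXint hXlog])] at h
  linarith

/-- If `X` and `Y` are nonnegative integrable random variables with
`X ≤_Lt Y` (i.e. `𝔼[exp(−λX)] ≥ 𝔼[exp(−λY)]` for all `λ ≥ 0`), `𝔼[X] = 𝔼[Y]`, and
`X log X`, `Y log Y` are integrable (with `0 log 0 = 0`, which is Lean's convention
since `Real.log 0 = 0`), then `𝔼[X log X] ≥ 𝔼[Y log Y]`. -/
theorem xLogX_ge_of_laplaceOrder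
    {Ω : Type*} [MeasurableSpace Ω] (μ : Measure Ω) [IsProbabilityMeasure μ]
    (X Y : Ω → ℝ) (hX : Measurable X) (hY : Measurable Y)
    (hXpos : ∀ o, 0 ≤ X o) (hYpos : ∀ o, 0 ≤ Y o)
    (hXint : Integrable X μ) (hYint : Integrable Y μ)
    (hLt : ∀ lam : ℝ, 0 ≤ lam →
      ∫ o, Real.exp (-lam * Y o) ∂μ ≤ ∫ o, Real.exp (-lam * X o) ∂μ)
    (hmean : ∫ o, X o ∂μ = ∫ o, Y o ∂μ)
    (hXlog : Integrable (fun o => X o * Real.log (X o)) μ)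
    (hYlog : Integrable (fun o => Y o * Real.log (Y o)) μ) :
    ∫ o, Y o * Real.log (Y o) ∂μ ≤ ∫ o, X o * Real.log (X o) ∂μ :=
  xLogX_ge_of_laplaceOrder_general μ X Y hXpos hYpos hXint hYint hLt hmean hXlog hYlog
end
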